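/- arXiv:2307.02638 — 2 statements merged into one kernel-verified Lean document; each statement's English description precedes it below -/
import Mathlib

section
/- Let K be a field of characteristic zero, and let g and h be formal power series in K[[x]] with zero constant term such that h is the compositional inverse of g (in particular the linear coefficient g_1 = g'(0) is nonzero). Write g_j = j!·[x^j]g and h_j = j!·[x^j]h. Then for all integers n ≥ k ≥ 1, Σ_{j=k}^{n} B_{n,j}(h_1, …, h_{n−j+1}) · B_{j,k}(g_1, …, g_{j−k+1}) = δ_{n,k}, where δ_{n,n} = 1 and δ_{n,k} = 0 for n ≠ k. -/
open PowerSeries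

/-- First entry of a tuple (`0` if the tuple is empty). -/
def firstEntry {k : ℕ} (r : Fin k → ℕ) : ℕ := if h : 0 < k then r ⟨0, h⟩ else 0

/-- The partial Bell polynomial `B_{n,k}` evaluated at `x 1, x 2, …, x (n-k+1)` over a
`ℚ`-algebra; it vanishes when `n < k`. -/
noncomputable def bellPoly {R : Type*} [CommRing R] [Algebra ℚ R] (n k : ℕ) (x : ℕ → R) : R :=
  ∑ r ∈ Finset.filter
      (fun r : Fin n → ℕ => (∑ i, r i) = k ∧ (∑ i, (i.1 + 1) * r i) = n)
      (Fintype.piFinset fun _ : Fin n => Finset.range (n + 1)),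
    algebraMap ℚ R ((n.factorial : ℚ) /
        ∏ i : Fin n, ((r i).factorial * ((i.1 + 1).factorial : ℚ) ^ (r i))) *
      ∏ i : Fin n, x (i.1 + 1) ^ (r i)

/-- Composition `g ∘ h` of formal power series (the usual substitution of `h` into `g`,
intended for `h` with zero constant term). -/
noncomputable def psComp {R : Type*} [CommSemiring R] (g h : PowerSeries R) : PowerSeries R :=
  PowerSeries.mk fun n => ∑ k ∈ Finset.range (n + 1),
    PowerSeries.coeff k g * PowerSeries.coeff n (h ^ k)

/-- Evaluation of `G ∈ K[[x]][[Y]]` at `a ∈ K[[x]]` (the usual substitution, intended for `a`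
with zero constant term). -/
noncomputable def psEval {K : Type*} [CommSemiring K] (G : PowerSeries (PowerSeries K))
    (a : PowerSeries K) : PowerSeries K :=
  PowerSeries.mk fun N => ∑ k ∈ Finset.range (N + 1),
    PowerSeries.coeff N (PowerSeries.coeff k G * a ^ k)

/-- Substituting `y ∈ K[[x]]` for the second variable of `F ∈ K[[x,y]]` (the usual
substitution of multivariate power series, intended for `y` with zero constant term). -/
noncomputable def substY {K : Type*} [CommSemiring K] (F : MvPowerSeries (Fin 2) K)
    (y : PowerSeries K) : PowerSeries K :=
  PowerSeries.mk fun N => ∑ m ∈ Finset.range (N + 1), ∑ n ∈ Finset.range (N + 1),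
    MvPowerSeries.coeff (Finsupp.single 0 m + Finsupp.single 1 n) F *
      PowerSeries.coeff (N - m) (y ^ n)

/-- `F = Σ_{m,n} f_{m,n} x^m y^n/(m! n!) ∈ K[[x,y]]`. -/
noncomputable def Fser {K : Type*} [Field K] (f : ℕ → ℕ → K) : MvPowerSeries (Fin 2) K :=
  fun s => (((s 0).factorial : K) * ((s 1).factorial : K))⁻¹ * f (s 0) (s 1)

/-- `φ_n = Σ_{m≥0} f_{m,n} x^m/m! ∈ K[[x]]`. -/
noncomputable def phiSer {K : Type*} [Field K] (f : ℕ → ℕ → K) (n : ℕ) : PowerSeries K :=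
  PowerSeries.mk fun m => ((m.factorial : K))⁻¹ * f m n

/-- `g = Σ_{n≥1} φ_n Y^n/n! ∈ K[[x]][[Y]]`. -/
noncomputable def gSer {K : Type*} [Field K] (f : ℕ → ℕ → K) : PowerSeries (PowerSeries K) :=
  PowerSeries.mk fun n => if n = 0 then 0 else
    PowerSeries.C ((n.factorial : K))⁻¹ * phiSer f n

/-!
Write `B(f)_{n,k}` for `B_{n,k}(1!·f_1, 2!·f_2, …)`. Expanding `f ^ k` by the multinomial theorem
gives `B(f)_{n,k} = n!/k! · [x^n] f ^ k` whenever `f(0) = 0`: the monomials of `B_{n,k}` are exactly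
the terms of degree `n` in that expansion. Hence the sum equals
`n!/k! · Σ_j [x^j] g^k · [x^n] h^j = n!/k! · [x^n] (g ∘ h)^k = n!/k! · [x^n] x^k`,
since composition with `h` is multiplicative (it is Mathlib's `PowerSeries.subst`).
-/

open Finset

section

variable {R : Type*} [CommRing R]

theorem coeff_pow_eq_zero_of_lt {f : R⟦X⟧} (hf : constantCoeff f = 0) {n j : ℕ} (hnj : n < j) :
    coeff n (f ^ j) = 0 :=
  X_pow_dvd_iff.mp (pow_dvd_pow_of_dvd (X_dvd_iff.mpr hf) j) n hnj

theorem psComp_eq_subst (g : R⟦X⟧) {h : R⟦X⟧} (hh : constantCoeff h = 0) :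
    psComp g h = g.subst h := by
  ext n
  rw [psComp, coeff_mk, coeff_subst' (HasSubst.of_constantCoeff_zero' hh),
    finsum_eq_sum_of_support_subset _ (s := range (n + 1))]
  · simp only [smul_eq_mul]
  · intro d hd
    by_contra hdn
    simp only [coe_range, Set.mem_Iio, not_lt] at hdn
    exact hd (by simp only [coeff_pow_eq_zero_of_lt hh (show n < d by omega), smul_zero])

theorem psComp_pow (g : R⟦X⟧) {h : R⟦X⟧} (hh : constantCoeff h = 0) (k : ℕ) :
    psComp (g ^ k) h = psComp g h ^ k := by
  rw [psComp_eq_subst _ hh, psComp_eq_subst _ hh, subst_pow (HasSubst.of_constantCoeff_zero' hh)]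

theorem coeff_pow_sum_C_mul_X_pow {ι : Type*} [DecidableEq ι] (s : Finset ι)
    (c : ι → R) (w : ι → ℕ) (m k : ℕ) :
    coeff m ((∑ i ∈ s, C (c i) * X ^ w i) ^ k) =
      ∑ r ∈ (piAntidiag s k).filter (fun r => ∑ i ∈ s, w i * r i = m),
        (Nat.multinomial s r : R) * ∏ i ∈ s, c i ^ r i := by
  have hprod (r : ι → ℕ) : ∏ i ∈ s, (C (c i) * X ^ w i) ^ r i =
      C (∏ i ∈ s, c i ^ r i) * X ^ (∑ i ∈ s, w i * r i) := by
    simp_rw [mul_pow, ← map_pow, ← pow_mul]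
    rw [prod_mul_distrib, ← map_prod, prod_pow_eq_pow_sum]
  simp_rw [sum_pow_eq_sum_piAntidiag, map_sum, hprod, ← map_natCast (C (R := R)), ← mul_assoc,
    ← map_mul, coeff_C_mul_X_pow, sum_filter, eq_comm]

theorem coe_trunc_succ_eq_sum_fin {f : R⟦X⟧} (hf : constantCoeff f = 0) (n : ℕ) :
    (trunc (n + 1) f : R⟦X⟧) = ∑ i : Fin n, C (coeff (i + 1) f) * X ^ (i.1 + 1) := by
  rw [Fin.sum_univ_eq_sum_range (fun i => C (coeff (i + 1) f) * X ^ (i + 1)), trunc_apply,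
    Nat.Ico_zero_eq_range, sum_range_succ', ← Polynomial.coeToPowerSeries.ringHom_apply]
  simp [hf, Polynomial.coe_monomial, monomial_eq_C_mul_X_pow]

theorem coeff_coe_trunc_pow (f : R⟦X⟧) (n k : ℕ) :
    coeff n ((trunc (n + 1) f : R⟦X⟧) ^ k) = coeff n (f ^ k) := by
  rw [← coeff_coe_trunc_of_lt n.lt_succ_self, trunc_trunc_pow,
    coeff_coe_trunc_of_lt n.lt_succ_self]

theorem coeff_pow_eq_sum_piAntidiag {f : R⟦X⟧} (hf : constantCoeff f = 0) (n k : ℕ) :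
    coeff n (f ^ k) =
      ∑ r ∈ (piAntidiag univ k).filter (fun r : Fin n → ℕ => ∑ i, (i.1 + 1) * r i = n),
        (Nat.multinomial univ r : R) * ∏ i : Fin n, coeff (i.1 + 1) f ^ r i := by
  rw [← coeff_coe_trunc_pow, coe_trunc_succ_eq_sum_fin hf, coeff_pow_sum_C_mul_X_pow]

theorem bellPoly_eq_sum_piAntidiag [Algebra ℚ R] (n k : ℕ) (x : ℕ → R) :
    bellPoly n k x =
      ∑ r ∈ (piAntidiag univ k).filter (fun r : Fin n → ℕ => ∑ i, (i.1 + 1) * r i = n),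
        algebraMap ℚ R ((n.factorial : ℚ) /
          ∏ i : Fin n, ((r i).factorial * ((i.1 + 1).factorial : ℚ) ^ (r i))) *
        ∏ i : Fin n, x (i.1 + 1) ^ (r i) := by
  refine sum_congr (ext fun r => ?_) fun _ _ => rfl
  simp only [mem_filter, Fintype.mem_piFinset, mem_range, mem_piAntidiag, mem_univ,
    implies_true, and_true]
  refine ⟨fun h => h.2, fun h => ⟨fun i => ?_, h⟩⟩
  calc r i ≤ (i.1 + 1) * r i := Nat.le_mul_of_pos_left _ i.1.succ_pos
    _ ≤ ∑ j, (j.1 + 1) * r j :=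
      single_le_sum (f := fun j : Fin n => (j.1 + 1) * r j) (fun j _ => Nat.zero_le _) (mem_univ i)
    _ < n + 1 := by omega

theorem factorial_div_prod_mul_prod_factorial_pow {n : ℕ} (r : Fin n → ℕ) :
    (n.factorial : ℚ) / (∏ i : Fin n, ((r i).factorial * ((i.1 + 1).factorial : ℚ) ^ (r i))) *
        ∏ i : Fin n, ((i.1 + 1).factorial : ℚ) ^ (r i) =
      (n.factorial : ℚ) / (∑ i, r i).factorial * Nat.multinomial univ r := by
  have hspec : (∏ i, ((r i).factorial : ℚ)) * Nat.multinomial univ r = (∑ i, r i).factorial := by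
    exact_mod_cast Nat.multinomial_spec univ r
  have hP : ∏ i : Fin n, ((r i).factorial : ℚ) ≠ 0 := prod_ne_zero_iff.mpr fun i _ => by positivity
  have hQ : ∏ i : Fin n, ((i.1 + 1).factorial : ℚ) ^ (r i) ≠ 0 :=
    prod_ne_zero_iff.mpr fun i _ => by positivity
  have hM : (Nat.multinomial univ r : ℚ) ≠ 0 := by
    exact_mod_cast (Nat.multinomial_pos univ r).ne'
  rw [show ∏ i : Fin n, ((r i).factorial * ((i.1 + 1).factorial : ℚ) ^ (r i)) =
    (∏ i : Fin n, ((r i).factorial : ℚ)) * ∏ i : Fin n, ((i.1 + 1).factorial : ℚ) ^ (r i) from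
    prod_mul_distrib, ← hspec]
  field_simp

theorem bellPoly_factorial_mul_coeff [Algebra ℚ R] {f : R⟦X⟧} (hf : constantCoeff f = 0)
    (n k : ℕ) :
    bellPoly n k (fun s => (s.factorial : R) * coeff s f) =
      algebraMap ℚ R ((n.factorial : ℚ) / k.factorial) * coeff n (f ^ k) := by
  rw [bellPoly_eq_sum_piAntidiag, coeff_pow_eq_sum_piAntidiag hf, mul_sum]
  refine sum_congr rfl fun r hr => ?_
  have hk : ∑ i, r i = k := (mem_piAntidiag.mp (mem_filter.mp hr).1).1
  rw [← hk, ← map_natCast (algebraMap ℚ R) (Nat.multinomial univ r), ← mul_assoc, ← map_mul,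
    ← factorial_div_prod_mul_prod_factorial_pow, map_mul, mul_assoc]
  simp only [mul_pow, prod_mul_distrib, map_prod, map_pow, map_natCast]

end

theorem statement5_general {K : Type*} [Field K] [CharZero K] (g h : PowerSeries K)
    (hg0 : PowerSeries.constantCoeff g = 0) (hh0 : PowerSeries.constantCoeff h = 0)
    (hinv1 : psComp g h = PowerSeries.X)
    (n k : ℕ) :
    ∑ j ∈ Finset.Icc k n,
        bellPoly n j (fun s => (s.factorial : K) * PowerSeries.coeff s h) *
          bellPoly j k (fun s => (s.factorial : K) * PowerSeries.coeff s g) =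
      if n = k then 1 else 0 := by
  have hcomp : ∑ j ∈ Icc k n, coeff j (g ^ k) * coeff n (h ^ j) = coeff n (psComp (g ^ k) h) := by
    rw [psComp, coeff_mk]
    refine sum_subset (fun j hj => ?_) fun j hj hjk => ?_
    · simp only [mem_Icc, mem_range] at hj ⊢
      omega
    · simp only [mem_Icc, mem_range, not_and, not_le] at hj hjk
      rw [coeff_pow_eq_zero_of_lt hg0 (by omega), zero_mul]
  calc _ = ∑ j ∈ Icc k n,
        algebraMap ℚ K ((n.factorial : ℚ) / k.factorial) * (coeff j (g ^ k) * coeff n (h ^ j)) := by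
        refine sum_congr rfl fun j _ => ?_
        rw [bellPoly_factorial_mul_coeff hh0, bellPoly_factorial_mul_coeff hg0,
          mul_mul_mul_comm, ← map_mul, div_mul_div_cancel₀ (by positivity), mul_comm (coeff n _)]
    _ = algebraMap ℚ K ((n.factorial : ℚ) / k.factorial) * coeff n (X ^ k : K⟦X⟧) := by
        rw [← mul_sum, hcomp, psComp_pow g hh0, hinv1]
    _ = if n = k then 1 else 0 := by
        rw [coeff_X_pow]
        split_ifs with hnk
        · simp [hnk, Nat.factorial_ne_zero]
        · simp

theorem statement5 {K : Type*} [Field K] [CharZero K] (g h : PowerSeries K)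
    (hg0 : PowerSeries.constantCoeff g = 0) (hh0 : PowerSeries.constantCoeff h = 0)
    (hinv1 : psComp g h = PowerSeries.X) (hinv2 : psComp h g = PowerSeries.X)
    (n k : ℕ) (hk : 1 ≤ k) (hkn : k ≤ n) :
    ∑ j ∈ Finset.Icc k n,
        bellPoly n j (fun s => (s.factorial : K) * PowerSeries.coeff s h) *
          bellPoly j k (fun s => (s.factorial : K) * PowerSeries.coeff s g) =
      if n = k then 1 else 0 :=
  statement5_general g h hg0 hh0 hinv1 n k
end

section
/- (Proposition) Let K be a field of characteristic zero and let f_{m,n} ∈ K (m, n ≥ 0) with f_{0,0} = 0 and f_{0,1} ≠ 0. Let φ_n = Σ_{m≥0} f_{m,n} x^m/m! ∈ K[[x]], g = Σ_{n≥1} φ_n Y^n/n! ∈ K[[x]][[Y]], ḡ its compositional inverse, ḡ_k = k!·[Y^k]ḡ ∈ K[[x]], and a_{k,j} = j!·[x^j]ḡ_k ∈ K. Let y = Σ_{m≥1} y_m x^m/m! be the unique power series with zero constant term such that F(x, y(x)) = 0, where F = Σ_{m,n≥0} f_{m,n} x^m y^n/(m! n!). Then for every m ≥ 1, y_m = Σ_{n=1}^{m}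 C(m,n) · Σ_{k=1}^{n} (−1)^k · a_{k,m−n} · B_{n,k}(f_{1,0}, …, f_{n−k+1,0}), where C(m,n) is the binomial coefficient. -/
open PowerSeries

/-
As a series in its second variable `F(x, Y) = φ₀ + g(Y)`, so `F(x, y) = 0` says `g(y) = -φ₀`, and
composing with `ḡ` gives `y = ḡ(-φ₀) = Σ_k ḡ_k (-φ₀)^k / k!`. Coefficients of products of
exponential generating functions combine binomially, and since `φ₀` is the exponential generating
function of `(f_{m,0})` with `f_{0,0} = 0`, `n! [x^n] φ₀^k = k! B_{n,k}(f_{1,0}, f_{2,0}, …)`.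
Substitution of a series with zero constant term into `K[[x]][[Y]]` is controlled by truncation:
modulo `x^n` it agrees with evaluating the polynomial truncation modulo `Y^n`, which makes it a
ring homomorphism compatible with composition.
-/

open Finset

namespace PowerSeries

lemma eq_of_forall_trunc_eq {R : Type*} [Semiring R] {f g : PowerSeries R}
    (h : ∀ n, trunc n f = trunc n g) : f = g := by
  ext i
  simpa [coeff_trunc] using congrArg (Polynomial.coeff · i) (h (i + 1))

lemma factorial_mul_coeff_mul {R : Type*} [CommSemiring R] (a b : PowerSeries R) (m : ℕ) :
    (m.factorial : R) * coeff m (a * b) = ∑ n ∈ range (m + 1),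
      (m.choose n : R) * ((m - n).factorial * coeff (m - n) a) * (n.factorial * coeff n b) := by
  rw [mul_comm a b, coeff_mul,
    Nat.sum_antidiagonal_eq_sum_range_succ (fun i j => coeff i b * coeff j a), mul_sum]
  refine sum_congr rfl fun n hn => ?_
  rw [← Nat.choose_mul_factorial_mul_factorial (mem_range_succ_iff.1 hn)]
  push_cast
  ring

lemma coeff_prod_C_mul_X_pow_pow {R ι : Type*} [CommSemiring R] (s : Finset ι) (c : ι → R)
    (e r : ι → ℕ) (n : ℕ) :
    coeff n (∏ i ∈ s, (C (c i) * X ^ e i) ^ r i) =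
      if ∑ i ∈ s, e i * r i = n then ∏ i ∈ s, c i ^ r i else 0 := by
  simp only [mul_pow, ← pow_mul, prod_mul_distrib, ← map_pow, ← map_prod, prod_pow_eq_pow_sum,
    coeff_C_mul_X_pow]
  simp only [eq_comm]

section Truncation

variable {R : Type*} [CommSemiring R] {w : PowerSeries R}

lemma coeff_mul_pow_of_lt (hw : constantCoeff w = 0) (c : PowerSeries R) {i k : ℕ} (h : i < k) :
    coeff i (c * w ^ k) = 0 :=
  X_pow_dvd_iff.1 (dvd_mul_of_dvd_right (pow_dvd_pow_of_dvd (X_dvd_iff.2 hw) k) c) i h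

lemma trunc_pow_mul_eq_zero (hw : constantCoeff w = 0) (n : ℕ) (c : PowerSeries R) :
    trunc n (w ^ n * c) = 0 := by
  ext i
  rw [coeff_trunc, mul_comm]
  split_ifs with h
  · exact coeff_mul_pow_of_lt hw c h
  · rfl

end Truncation

lemma trunc_eval_eq_of_coeff_eq {R : Type*} [CommRing R] {w : PowerSeries R}
    (hw : constantCoeff w = 0) {P Q : Polynomial (PowerSeries R)} {n : ℕ} (h : ∀ d < n, P.coeff d = Q.coeff d) :
    trunc n (P.eval w) = trunc n (Q.eval w) := by
  obtain ⟨S, hS⟩ := (Polynomial.X_pow_dvd_iff (f := P - Q)).2 fun d hd => by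
    rw [Polynomial.coeff_sub, h d hd, sub_self]
  rw [← sub_eq_zero, ← map_sub, ← Polynomial.eval_sub, hS, Polynomial.eval_mul,
    Polynomial.eval_pow, Polynomial.eval_X, trunc_pow_mul_eq_zero hw]

end PowerSeries

section Substitution

variable {R : Type*} [CommRing R] {w : PowerSeries R}

lemma psEval_add (A B : PowerSeries (PowerSeries R)) (w : PowerSeries R) :
    psEval (A + B) w = psEval A w + psEval B w := by
  ext N
  simp only [psEval, coeff_mk, map_add, add_mul, sum_add_distrib]

lemma psEval_C (a w : PowerSeries R) : psEval (C a) w = a := by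
  ext N
  rw [psEval, coeff_mk, sum_eq_single_of_mem 0 (mem_range.2 N.succ_pos)]
  · simp
  · intro k _ hk
    rw [coeff_C, if_neg hk, zero_mul, map_zero]

lemma constantCoeff_psEval (G : PowerSeries (PowerSeries R)) (w : PowerSeries R) :
    constantCoeff (psEval G w) = constantCoeff (constantCoeff G) := by
  rw [← coeff_zero_eq_constantCoeff_apply, psEval, coeff_mk]
  simp

lemma trunc_psEval (G : PowerSeries (PowerSeries R)) (hw : constantCoeff w = 0) {n m : ℕ}
    (hnm : n ≤ m) : trunc n (psEval G w) = trunc n ((trunc m G).eval w) := by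
  ext i
  rw [coeff_trunc, coeff_trunc]
  split_ifs with hi
  · rw [psEval, coeff_mk, Polynomial.eval, eval₂_trunc_eq_sum_range, map_sum]
    refine sum_subset (range_subset_range.2 (by omega)) fun k _ hk => ?_
    exact coeff_mul_pow_of_lt hw _ (by simpa using hk)
  · rfl

lemma trunc_psEval_congr (hw : constantCoeff w = 0) {A B : PowerSeries (PowerSeries R)} {n : ℕ}
    (h : trunc n A = trunc n B) : trunc n (psEval A w) = trunc n (psEval B w) := by
  rw [trunc_psEval A hw le_rfl, h, ← trunc_psEval B hw le_rfl]

lemma psEval_mul (A B : PowerSeries (PowerSeries R)) (hw : constantCoeff w = 0) :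
    psEval (A * B) w = psEval A w * psEval B w := by
  refine eq_of_forall_trunc_eq fun n => ?_
  rw [trunc_psEval _ hw le_rfl, ← trunc_trunc_mul_trunc (psEval A w), trunc_psEval A hw le_rfl,
    trunc_psEval B hw le_rfl, trunc_trunc_mul_trunc, ← Polynomial.eval_mul]
  refine trunc_eval_eq_of_coeff_eq hw fun d hd => ?_
  rw [coeff_trunc, if_pos hd, coeff_mul_eq_coeff_trunc_mul_trunc _ _ hd, ← Polynomial.coe_mul,
    Polynomial.coeff_coe]

noncomputable def psEvalRingHom (w : PowerSeries R) (hw : constantCoeff w = 0) :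
    PowerSeries (PowerSeries R) →+* PowerSeries R where
  toFun G := psEval G w
  map_one' := by rw [← map_one C, psEval_C]
  map_mul' A B := psEval_mul A B hw
  map_zero' := by rw [← map_zero C, psEval_C]
  map_add' A B := psEval_add A B w

lemma psEval_X (hw : constantCoeff w = 0) : psEval X w = w := by
  refine eq_of_forall_trunc_eq fun n => ?_
  rw [trunc_psEval X hw (Nat.le_add_right n 2), trunc_X, Polynomial.eval_X]

lemma trunc_psComp (G : PowerSeries R) {H : PowerSeries R} (hH : constantCoeff H = 0) (n : ℕ) :
    trunc n (psComp G H) = trunc n ((trunc n G).eval₂ C H) := by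
  ext i
  rw [coeff_trunc, coeff_trunc]
  split_ifs with hi
  · rw [psComp, coeff_mk, eval₂_trunc_eq_sum_range, map_sum]
    simp only [coeff_C_mul]
    refine sum_subset (range_subset_range.2 (by omega)) fun k _ hk => ?_
    rw [← one_mul (H ^ k), coeff_mul_pow_of_lt hH _ (by simpa using hk), mul_zero]
  · rfl

lemma psEval_psComp (G : PowerSeries (PowerSeries R)) {H : PowerSeries (PowerSeries R)}
    (hH : constantCoeff H = 0) (hw : constantCoeff w = 0) :
    psEval (psComp G H) w = psEval G (psEval H w) := by
  have hHw : constantCoeff (psEval H w) = 0 := by rw [constantCoeff_psEval, hH, map_zero]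
  refine eq_of_forall_trunc_eq fun n => ?_
  have hC : (psEvalRingHom w hw).comp C = RingHom.id _ := RingHom.ext (psEval_C · w)
  calc trunc n (psEval (psComp G H) w)
      = trunc n (psEvalRingHom w hw ((trunc n G).eval₂ C H)) :=
        trunc_psEval_congr hw (trunc_psComp G hH n)
    _ = trunc n ((trunc n G).eval (psEval H w)) := by
        rw [Polynomial.hom_eval₂, hC]; rfl
    _ = trunc n (psEval G (psEval H w)) := (trunc_psEval G hHw le_rfl).symm

end Substitution

section Bell

variable {K : Type*} [Field K]

noncomputable def egf (x : ℕ → K) : PowerSeries K :=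
  mk fun j => (j.factorial : K)⁻¹ * x j

lemma coe_trunc_succ_egf (x : ℕ → K) (hx : x 0 = 0) (n : ℕ) :
    (trunc (n + 1) (egf x) : PowerSeries K) =
      ∑ i : Fin n, C (((i.1 + 1).factorial : K)⁻¹ * x (i.1 + 1)) * X ^ (i.1 + 1) := by
  rw [egf, trunc_apply, Nat.Ico_zero_eq_range, sum_range_succ', coeff_mk, hx, mul_zero, map_zero,
    add_zero, Fin.sum_univ_eq_sum_range (fun i => C (((i + 1).factorial : K)⁻¹ * x (i + 1)) *
      X ^ (i + 1)), ← Polynomial.coeToPowerSeries.ringHom_apply, map_sum]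
  simp only [coeff_mk, Polynomial.coeToPowerSeries.ringHom_apply, Polynomial.coe_monomial,
    monomial_eq_C_mul_X_pow]

lemma factorial_mul_coeff_egf_pow [CharZero K] (x : ℕ → K) (hx : x 0 = 0) (n k : ℕ) :
    (n.factorial : K) * coeff n (egf x ^ k) =
      k.factorial * bellPoly n k x := by
  have htrunc : coeff n (egf x ^ k) = coeff n ((trunc (n + 1) (egf x) : PowerSeries K) ^ k) := by
    rw [← coeff_coe_trunc_of_lt n.lt_succ_self, ← trunc_trunc_pow,
      coeff_coe_trunc_of_lt n.lt_succ_self]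
  have hweight : ∀ r : Fin n → ℕ, ∑ i, (i.1 + 1) * r i = n → ∀ i, r i ∈ range (n + 1) :=
    fun r hr i => mem_range_succ_iff.2 <| hr ▸ (Nat.le_mul_of_pos_left _ i.1.succ_pos).trans
      (single_le_sum (f := fun i : Fin n => (i.1 + 1) * r i) (fun _ _ => Nat.zero_le _)
        (mem_univ i))
  have hsupport : {r ∈ piAntidiag (univ : Finset (Fin n)) k | ∑ i : Fin n, (i.1 + 1) * r i = n} =
      {r ∈ Fintype.piFinset fun _ : Fin n => range (n + 1) |
        ∑ i, r i = k ∧ ∑ i, (i.1 + 1) * r i = n} := by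
    ext r
    simp only [mem_filter, mem_piAntidiag, Fintype.mem_piFinset, mem_univ, implies_true, and_true]
    exact ⟨fun ⟨hk, hn⟩ => ⟨hweight r hn, hk, hn⟩, fun ⟨_, hk, hn⟩ => ⟨hk, hn⟩⟩
  rw [htrunc, coe_trunc_succ_egf x hx, sum_pow_eq_sum_piAntidiag, map_sum]
  simp only [← map_natCast C, coeff_C_mul, coeff_prod_C_mul_X_pow_pow, mul_ite, mul_zero]
  rw [← sum_filter, hsupport, bellPoly, mul_sum, mul_sum]
  refine sum_congr rfl fun r hr => ?_
  have hk : ∑ i, r i = k := (mem_filter.1 hr).2.1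
  have hmult : (∏ i, ((r i).factorial : K)) * Nat.multinomial univ r = k.factorial := by
    exact_mod_cast hk ▸ Nat.multinomial_spec univ r
  have hP : ∏ i, ((r i).factorial : K) ≠ 0 :=
    prod_ne_zero_iff.2 fun i _ => Nat.cast_ne_zero.2 (Nat.factorial_ne_zero _)
  have hQ : ∏ i : Fin n, ((i.1 + 1).factorial : K) ^ r i ≠ 0 :=
    prod_ne_zero_iff.2 fun i _ => pow_ne_zero _ (Nat.cast_ne_zero.2 (Nat.factorial_ne_zero _))
  rw [← hmult, eq_ratCast]
  push_cast
  simp only [mul_pow, inv_pow, prod_mul_distrib, prod_inv_distrib]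
  field_simp

lemma bellPoly_eq_zero_of_lt {R : Type*} [CommRing R] [Algebra ℚ R] {n k : ℕ} (h : n < k)
    (x : ℕ → R) : bellPoly n k x = 0 := by
  rw [bellPoly, filter_false_of_mem, sum_empty]
  rintro r - ⟨hk, hn⟩
  have : ∑ i, r i ≤ ∑ i : Fin n, (i.1 + 1) * r i :=
    sum_le_sum fun i _ => Nat.le_mul_of_pos_left _ i.1.succ_pos
  omega

end Bell

lemma sum_range_sum_range_eq_sum_Icc_sum_Icc {M : Type*} [AddCommMonoid M] (T : ℕ → ℕ → M)
    (h0 : ∀ n, T 0 n = 0) (hlt : ∀ k n, n < k → T k n = 0) (m : ℕ) :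
    ∑ k ∈ range (m + 1), ∑ n ∈ range (m + 1), T k n = ∑ n ∈ Icc 1 m, ∑ k ∈ Icc 1 n, T k n := by
  have hvanish : ∀ n k, k ∉ Icc 1 n → T k n = 0 := fun n k hk => by
    rcases Nat.eq_zero_or_pos k with rfl | hk0
    · exact h0 n
    · exact hlt k n (by simp only [mem_Icc, not_and_or, not_le] at hk; omega)
  rw [sum_comm, ← sum_subset (fun n hn => mem_range_succ_iff.2 (mem_Icc.1 hn).2) fun n hn hn' => ?_]
  · refine sum_congr rfl fun n hn => (sum_subset (fun k hk => ?_) fun k _ hk => hvanish n k hk).symm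
    exact mem_range_succ_iff.2 ((mem_Icc.1 hk).2.trans (mem_Icc.1 hn).2)
  · have : n = 0 := by simp only [mem_range, mem_Icc] at hn hn'; omega
    subst this
    exact sum_eq_zero fun k _ => hvanish 0 k (by simp)

lemma factorial_mul_coeff_psEval_neg_egf {K : Type*} [Field K] [CharZero K]
    (G : PowerSeries (PowerSeries K)) (hG : constantCoeff G = 0) (x : ℕ → K) (hx : x 0 = 0)
    (m : ℕ) :
    (m.factorial : K) * coeff m (psEval G (-egf x)) =
      ∑ n ∈ Icc 1 m, (m.choose n : K) * ∑ k ∈ Icc 1 n, (-1 : K) ^ k *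
        (((m - n).factorial : K) * ((k.factorial : K) * coeff (m - n) (coeff k G))) *
          bellPoly n k x := by
  have hpow : ∀ n k, (n.factorial : K) * coeff n ((-egf x) ^ k) =
      (-1) ^ k * (k.factorial * bellPoly n k x) := fun n k => by
    rw [neg_pow, ← map_one C, ← map_neg C, ← map_pow, coeff_C_mul, mul_left_comm,
      factorial_mul_coeff_egf_pow x hx]
  rw [psEval, coeff_mk, mul_sum]
  simp only [factorial_mul_coeff_mul, hpow]
  rw [sum_range_sum_range_eq_sum_Icc_sum_Icc]
  · simp only [mul_sum]
    refine sum_congr rfl fun n _ => sum_congr rfl fun k _ => by ring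
  · intro n
    rw [coeff_zero_eq_constantCoeff_apply, hG]
    simp
  · intro k n h
    simp [bellPoly_eq_zero_of_lt h]

lemma coeff_Fser {K : Type*} [Field K] (f : ℕ → ℕ → K) (m n : ℕ) :
    MvPowerSeries.coeff (Finsupp.single 0 m + Finsupp.single 1 n) (Fser f) =
      (m.factorial : K)⁻¹ * (n.factorial : K)⁻¹ * f m n := by
  simp [MvPowerSeries.coeff_apply, Fser, mul_comm]

lemma substY_Fser {K : Type*} [Field K] (f : ℕ → ℕ → K) (z : PowerSeries K) :
    substY (Fser f) z = phiSer f 0 + psEval (gSer f) z := by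
  ext N
  rw [map_add, substY, psEval, coeff_mk, coeff_mk, sum_comm, sum_range_succ',
    sum_range_succ' (fun k => coeff N (coeff k (gSer f) * z ^ k)), add_comm]
  congr 1
  · rw [sum_eq_single_of_mem N (mem_range.2 N.lt_succ_self) fun m hm hmN => by
      rw [pow_zero, coeff_one, if_neg (by rw [mem_range] at hm; omega), mul_zero]]
    rw [coeff_Fser, phiSer, coeff_mk]
    simp
  · rw [gSer, coeff_mk, if_pos rfl, zero_mul, map_zero, add_zero]
    refine sum_congr rfl fun k _ => ?_
    rw [coeff_mk, if_neg k.succ_ne_zero, mul_assoc, coeff_C_mul, coeff_mul,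
      Nat.sum_antidiagonal_eq_sum_range_succ_mk, mul_sum]
    refine sum_congr rfl fun m _ => ?_
    rw [coeff_Fser, phiSer, coeff_mk]
    ring

theorem statement7_general {K : Type*} [Field K] [CharZero K] (f : ℕ → ℕ → K)
    (hf00 : f 0 0 = 0)
    (gbar : PowerSeries (PowerSeries K))
    (hgbar0 : PowerSeries.constantCoeff gbar = 0)
    (hgbar2 : psComp gbar (gSer f) = PowerSeries.X)
    (y : PowerSeries K) (hy0 : PowerSeries.constantCoeff y = 0)
    (hy : substY (Fser f) y = 0)
    (m : ℕ) :
    (m.factorial : K) * PowerSeries.coeff m y =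
      ∑ n ∈ Finset.Icc 1 m, (m.choose n : K) *
        ∑ k ∈ Finset.Icc 1 n, (-1 : K) ^ k *
          (((m - n).factorial : K) * ((k.factorial : K) *
            PowerSeries.coeff (m - n) (PowerSeries.coeff k gbar))) *
          bellPoly n k (fun s => f s 0) := by
  have hg : constantCoeff (gSer f) = 0 := by
    rw [← coeff_zero_eq_constantCoeff_apply, gSer, coeff_mk, if_pos rfl]
  have hgy : psEval (gSer f) y = -phiSer f 0 :=
    eq_neg_of_add_eq_zero_right (by rw [← substY_Fser, hy])
  have hyw : y = psEval gbar (-phiSer f 0) := by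
    rw [← hgy, ← psEval_psComp gbar hg hy0, hgbar2, psEval_X hy0]
  rw [hyw]
  exact factorial_mul_coeff_psEval_neg_egf gbar hgbar0 (f · 0) hf00 m

theorem statement7 {K : Type*} [Field K] [CharZero K] (f : ℕ → ℕ → K)
    (hf00 : f 0 0 = 0) (hf01 : f 0 1 ≠ 0)
    (gbar : PowerSeries (PowerSeries K))
    (hgbar0 : PowerSeries.constantCoeff gbar = 0)
    (hgbar1 : psComp (gSer f) gbar = PowerSeries.X)
    (hgbar2 : psComp gbar (gSer f) = PowerSeries.X)
    (y : PowerSeries K) (hy0 : PowerSeries.constantCoeff y = 0)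
    (hy : substY (Fser f) y = 0)
    (m : ℕ) (hm : 1 ≤ m) :
    (m.factorial : K) * PowerSeries.coeff m y =
      ∑ n ∈ Finset.Icc 1 m, (m.choose n : K) *
        ∑ k ∈ Finset.Icc 1 n, (-1 : K) ^ k *
          (((m - n).factorial : K) * ((k.factorial : K) *
            PowerSeries.coeff (m - n) (PowerSeries.coeff k gbar))) *
          bellPoly n k (fun s => f s 0) :=
  statement7_general f hf00 gbar hgbar0 hgbar2 y hy0 hy m
end
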